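/- If M is a supersolvable matroid of rank r with maximal chain of modular flats ∅ = X₀ ⊂ X₁ ⊂ ... ⊂ X_r = E(M) (rank Xᵢ = i, M simple), then χ(M;λ) = Π_{i=1}^{r} (λ - (|Xᵢ| - |X_{i-1}|)); in particular all characteristic roots of M are nonnegative integers. -/

import Mathlib

open Finset Polynomial

section MatroidDefs

variable {α : Type} [Fintype α] [DecidableEq α]

/-- The rank of a set `X` in a matroid `M`: the largest size of an independent subset
of `X`. -/
noncomputable def mrk (M : Matroid α) (X : Set α) : ℕ :=
  sSup {n | ∃ I, M.Indep I ∧ I ⊆ X ∧ I.ncard = n}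

/-- A matroid is simple if every pair of elements of the ground set is independent
(equivalently, it has no loops and no parallel pairs). -/
def mSimple (M : Matroid α) : Prop :=
  ∀ e f, e ∈ M.E → f ∈ M.E → M.Indep {e, f}

/-- The characteristic polynomial of a matroid on the ground set `α`, via the Whitney
rank expansion `χ(M;λ) = Σ_{A ⊆ E} (-1)^{|A|} λ^{r(E) - r(A)}` (which agrees with the
Möbius-function definition for loopless matroids). -/
noncomputable def charPoly (M : Matroid α) : Polynomial ℤ :=
  ∑ A : Finset α, C ((-1 : ℤ) ^ A.card) * X ^ (mrk M Set.univ - mrk M (A : Set α))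

/-- The number of lines (rank-2 flats) of `M` with exactly `k` points. -/
noncomputable def lineCount (M : Matroid α) (k : ℕ) : ℕ :=
  Nat.card {F : Set α | M.IsFlat F ∧ mrk M F = 2 ∧ F.ncard = k}

/-- Every line (rank-2 flat) of `M` has at most 3 points. -/
def linesAtMost3 (M : Matroid α) : Prop :=
  ∀ F : Set α, M.IsFlat F → mrk M F = 2 → F.ncard ≤ 3

/-- An integer polynomial has only real roots. -/
def onlyRealRoots (p : Polynomial ℤ) : Prop :=
  (p.map (Int.castRingHom ℝ)).Splits

/-- An integer polynomial has only integral roots: every complex root is an integer. -/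
def onlyIntegerRoots (p : Polynomial ℤ) : Prop :=
  ∀ z ∈ (p.map (Int.castRingHom ℂ)).roots, ∃ k : ℤ, z = (k : ℂ)

/-- A matroid is connected if no proper nonempty subset of the ground set gives an
additive separation of the rank. -/
def mConnected (M : Matroid α) : Prop :=
  M.E.Nonempty ∧ ∀ A : Set α, A ⊆ M.E → A.Nonempty → (M.E \ A).Nonempty →
    mrk M A + mrk M (M.E \ A) ≠ mrk M M.E

/-- A flat `X` of `M` is modular if every line `L` with
`rank(X ∨ L) = rank(X) + 1` meets `X`. -/
def modularFlat (M : Matroid α) (Y : Set α) : Prop :=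
  M.IsFlat Y ∧ ∀ L : Set α, M.IsFlat L → mrk M L = 2 →
    mrk M (Y ∪ L) = mrk M Y + 1 → (Y ∩ L).Nonempty

end MatroidDefs

/-!
Split a subset `A` of the flat `Z = F i.succ` as `A₀ ∪ A₁` with `A₀ ⊆ Y = F i.castSucc` and
`A₁ ⊆ Z \ Y`. If `A₁` contains two points `e ≠ f`, the line through them lies in `Z`, so
`rank (Y ∪ line) = rank Y + 1` and modularity of `Y` gives a point `g ∈ Y` on that line;
toggling `g` in `A₀` changes the sign of the Whitney term but not the rank, so these terms
cancel. The terms with `A₁ = ∅` contribute `λ · χ(M|Y)` and each `A₁ = {a}` contributes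
`-χ(M|Y)`, whence `χ(M|Z) = (λ - |Z \ Y|) χ(M|Y)`, and the product formula follows along
the chain.
-/

namespace Finset

variable {α R : Type*} [DecidableEq α]

theorem sum_powerset_eq_zero_of_insert_eq_neg [AddCommGroup R] {s : Finset α} {a : α}
    (ha : a ∈ s) {f : Finset α → R} (hf : ∀ t ⊆ s.erase a, f (insert a t) = -f t) :
    ∑ t ∈ s.powerset, f t = 0 := by
  rw [← insert_erase ha, sum_powerset_insert (notMem_erase a s), ← sum_add_distrib]
  exact sum_eq_zero fun t ht => by rw [hf t (mem_powerset.1 ht), add_neg_cancel]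

theorem sum_powerset_union_of_disjoint [AddCommMonoid R] {s t : Finset α} (h : Disjoint s t)
    (f : Finset α → R) :
    ∑ u ∈ (s ∪ t).powerset, f u = ∑ v ∈ t.powerset, ∑ u ∈ s.powerset, f (u ∪ v) := by
  induction t using Finset.induction_on generalizing f with
  | empty => simp
  | insert b t hbt ih =>
    rw [disjoint_insert_right] at h
    rw [union_insert, sum_powerset_insert (by simp [h.1, hbt]), sum_powerset_insert hbt,
      ih h.2, ih h.2]
    simp only [union_insert]

theorem sum_powerset_of_forall_one_lt_card [AddCommMonoid R] (s : Finset α)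
    {f : Finset α → R} (hf : ∀ t ⊆ s, 1 < #t → f t = 0) :
    ∑ t ∈ s.powerset, f t = f ∅ + ∑ a ∈ s, f {a} := by
  induction s using Finset.induction_on with
  | empty => simp
  | insert a s has ih =>
    have hins : ∑ t ∈ s.powerset, f (insert a t) = f {a} := by
      refine (sum_eq_single ∅ (fun t ht htne => hf _ (insert_subset_insert a
        (mem_powerset.1 ht)) ?_) (by simp)).trans (by simp)
      rw [card_insert_of_notMem fun h => has (mem_powerset.1 ht h)]
      exact Nat.lt_add_of_pos_left (card_pos.2 (nonempty_iff_ne_empty.2 htne))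
    rw [sum_powerset_insert has, ih fun t ht => hf t (ht.trans (subset_insert a s)), hins,
      sum_insert has, add_assoc, add_comm (f {a})]

end Finset

theorem Fin.eq_prod_of_succ_eq_mul {R : Type*} [CommMonoid R] {r : ℕ} (f : Fin (r + 1) → R)
    (c : Fin r → R) (h0 : f 0 = 1) (hsucc : ∀ i, f i.succ = c i * f i.castSucc) :
    f (Fin.last r) = ∏ i, c i := by
  induction r with
  | zero => simpa using h0
  | succ r ih =>
    have hc := ih (f ∘ Fin.castSucc) (c ∘ Fin.castSucc) h0 fun i => by
      show f i.succ.castSucc = _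
      rw [← Fin.succ_castSucc]
      exact hsucc i.castSucc
    rw [Fin.prod_univ_castSucc, ← Fin.succ_last, hsucc, mul_comm]
    exact congrArg (· * c (Fin.last r)) hc

section Rank

variable {α : Type} [Finite α] {M : Matroid α} {X Y : Set α} {e f : α}

theorem natCast_mrk (M : Matroid α) (X : Set α) : (mrk M X : ℕ∞) = M.eRk X := by
  obtain ⟨I, hI⟩ := M.exists_isBasis' X
  have hmax : IsGreatest {n | ∃ J, M.Indep J ∧ J ⊆ X ∧ J.ncard = n} I.ncard := by
    refine ⟨⟨I, hI.indep, hI.subset, rfl⟩, ?_⟩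
    rintro _ ⟨J, hJ, hJX, rfl⟩
    have hle := hJ.encard_le_eRk_of_subset hJX
    rw [← hI.encard_eq_eRk, ← J.toFinite.cast_ncard_eq, ← I.toFinite.cast_ncard_eq] at hle
    exact_mod_cast hle
  rw [mrk, hmax.csSup_eq, I.toFinite.cast_ncard_eq, hI.encard_eq_eRk]

theorem mrk_mono (h : X ⊆ Y) : mrk M X ≤ mrk M Y := by
  have := M.eRk_mono h
  rwa [← natCast_mrk, ← natCast_mrk, Nat.cast_le] at this

theorem mrk_insert_of_notMem_closure (he : e ∈ M.E \ M.closure X) :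
    mrk M (insert e X) = mrk M X + 1 := by
  have := Matroid.eRk_insert_eq_add_one he
  rw [← natCast_mrk, ← natCast_mrk] at this
  exact_mod_cast this

theorem mrk_insert_of_mem_closure (he : e ∈ M.closure X) : mrk M (insert e X) = mrk M X := by
  have : M.eRk (insert e X) = M.eRk X := by
    rw [← M.eRk_closure_eq, Matroid.closure_insert_eq_of_mem_closure he, M.eRk_closure_eq]
  rw [← natCast_mrk, ← natCast_mrk] at this
  exact_mod_cast this

theorem mrk_closure_pair (h : M.Indep {e, f}) (hef : e ≠ f) : mrk M (M.closure {e, f}) = 2 := by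
  have : M.eRk (M.closure {e, f}) = 2 := by
    rw [M.eRk_closure_eq, h.eRk_eq_encard, Set.encard_pair hef]
  rw [← natCast_mrk] at this
  exact_mod_cast this

theorem modularFlat.exists_mem_closure_pair {Z : Set α} (hY : modularFlat M Y)
    (hsimple : mSimple M) (hZ : M.IsFlat Z) (hYZ : Y ⊆ Z) (hrk : mrk M Z = mrk M Y + 1)
    (he : e ∈ Z \ Y) (hf : f ∈ Z \ Y) (hef : e ≠ f) : ∃ g ∈ Y, g ∈ M.closure {e, f} := by
  have hpair : ({e, f} : Set α) ⊆ Z := Set.insert_subset he.1 (Set.singleton_subset_iff.2 hf.1)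
  have hLZ : M.closure {e, f} ⊆ Z := hZ.closure ▸ M.closure_subset_closure hpair
  have heL : e ∈ M.closure {e, f} :=
    M.mem_closure_of_mem (Set.mem_insert e _) (hpair.trans hZ.subset_ground)
  have hrkYL : mrk M (Y ∪ M.closure {e, f}) = mrk M Y + 1 := by
    refine le_antisymm (hrk ▸ mrk_mono (Set.union_subset hYZ hLZ)) ?_
    have heY : e ∈ M.E \ M.closure Y := ⟨hZ.subset_ground he.1, by rw [hY.1.closure]; exact he.2⟩
    calc mrk M Y + 1 = mrk M (insert e Y) := (mrk_insert_of_notMem_closure heY).symm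
      _ ≤ _ := mrk_mono (Set.insert_subset (Or.inr heL) Set.subset_union_left)
  exact hY.2 _ (Matroid.isFlat_closure _)
    (mrk_closure_pair (hsimple e f (hZ.subset_ground he.1) (hZ.subset_ground hf.1)) hef) hrkYL

end Rank

section CharPoly

variable {α : Type} {M : Matroid α} {Y Z : Finset α}

/-- The characteristic polynomial `χ(M|Y; λ)` of the restriction of `M` to `Y`. -/
noncomputable def charPolyOn (M : Matroid α) (Y : Finset α) : ℤ[X] :=
  ∑ A ∈ Y.powerset, (-1) ^ #A * X ^ (mrk M Y - mrk M A)

theorem charPoly_eq_charPolyOn_univ [Fintype α] [DecidableEq α] (M : Matroid α) :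
    charPoly M = charPolyOn M univ := by
  simp [charPoly, charPolyOn]

theorem charPolyOn_empty (M : Matroid α) : charPolyOn M ∅ = 1 := by
  simp [charPolyOn]

theorem sum_powerset_union_eq_zero_of_modularFlat [Finite α] [DecidableEq α]
    (hsimple : mSimple M) (hY : modularFlat M Y) (hZ : M.IsFlat Z) (hYZ : Y ⊆ Z)
    (hrk : mrk M Z = mrk M Y + 1) {A₁ : Finset α} (hA₁ : A₁ ⊆ Z \ Y) (hcard : 1 < #A₁)
    (n : ℕ) : ∑ A₀ ∈ Y.powerset, (-1 : ℤ[X]) ^ #(A₀ ∪ A₁) * X ^ (n - mrk M ↑(A₀ ∪ A₁)) = 0 := by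
  obtain ⟨e, he, f, hf, hef⟩ := one_lt_card.1 hcard
  have hA₁' : (A₁ : Set α) ⊆ ↑Z \ ↑Y := by exact_mod_cast hA₁
  obtain ⟨g, hgY, hgL⟩ := hY.exists_mem_closure_pair hsimple hZ (coe_subset.2 hYZ) hrk
    (hA₁' he) (hA₁' hf) hef
  have hgA₁ : g ∉ A₁ := fun h => (mem_sdiff.1 (hA₁ h)).2 hgY
  refine sum_powerset_eq_zero_of_insert_eq_neg hgY fun A₀ hA₀ => ?_
  have hgA : g ∉ A₀ ∪ A₁ := by
    simpa [hgA₁] using fun h => notMem_erase g Y (hA₀ h)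
  have hgcl : g ∈ M.closure ↑(A₀ ∪ A₁) := by
    refine M.closure_subset_closure ?_ hgL
    simp [Set.insert_subset_iff, he, hf]
  rw [insert_union, card_insert_of_notMem hgA, coe_insert, mrk_insert_of_mem_closure hgcl,
    pow_succ]
  ring

theorem charPolyOn_eq_mul_of_modularFlat [Finite α] [DecidableEq α] (hsimple : mSimple M)
    (hY : modularFlat M Y) (hZ : M.IsFlat Z) (hYZ : Y ⊆ Z) (hrk : mrk M Z = mrk M Y + 1) :
    charPolyOn M Z = (X - C (#(Z \ Y) : ℤ)) * charPolyOn M Y := by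
  have hmrk : ∀ A₀ ∈ Y.powerset, mrk M ↑A₀ ≤ mrk M Y := fun A₀ hA₀ =>
    mrk_mono (coe_subset.2 (mem_powerset.1 hA₀))
  have hempty : ∑ A₀ ∈ Y.powerset, (-1 : ℤ[X]) ^ #(A₀ ∪ ∅) * X ^ (mrk M Y + 1 - mrk M ↑(A₀ ∪ ∅))
      = X * charPolyOn M Y := by
    rw [charPolyOn, mul_sum]
    refine sum_congr rfl fun A₀ hA₀ => ?_
    rw [union_empty, Nat.sub_add_comm (hmrk A₀ hA₀), pow_succ]
    ring
  have hsingleton : ∀ a ∈ Z \ Y, ∑ A₀ ∈ Y.powerset,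
      (-1 : ℤ[X]) ^ #(A₀ ∪ {a}) * X ^ (mrk M Y + 1 - mrk M ↑(A₀ ∪ {a})) = -charPolyOn M Y := by
    intro a ha
    obtain ⟨haZ, haY⟩ := mem_sdiff.1 ha
    rw [charPolyOn, ← sum_neg_distrib]
    refine sum_congr rfl fun A₀ hA₀ => ?_
    have haA₀ : a ∉ A₀ := fun h => haY (mem_powerset.1 hA₀ h)
    have hacl : a ∈ M.E \ M.closure ↑A₀ := ⟨hZ.subset_ground haZ, fun h =>
      haY (mem_coe.1 (hY.1.closure ▸
        M.closure_subset_closure (coe_subset.2 (mem_powerset.1 hA₀)) h))⟩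
    rw [union_comm, ← insert_eq, card_insert_of_notMem haA₀, coe_insert,
      mrk_insert_of_notMem_closure hacl, Nat.add_sub_add_right, pow_succ]
    ring
  conv_lhs => rw [charPolyOn, hrk, ← union_sdiff_of_subset hYZ,
    sum_powerset_union_of_disjoint disjoint_sdiff]
  rw [sum_powerset_of_forall_one_lt_card _ fun A₁ hA₁ hcard =>
      sum_powerset_union_eq_zero_of_modularFlat hsimple hY hZ hYZ hrk hA₁ hcard _,
    hempty, sum_congr rfl hsingleton, sum_const, C_eq_natCast, nsmul_eq_mul]
  ring

end CharPoly

theorem exists_natCast_eq_of_mem_roots_prod {ι : Type*} (s : Finset ι) (n : ι → ℕ) {z : ℂ}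
    (hz : z ∈ ((∏ i ∈ s, (X - C (n i : ℤ))).map (Int.castRingHom ℂ)).roots) :
    ∃ k : ℕ, z = k := by
  have hroot := isRoot_of_mem_roots hz
  simp only [IsRoot, Polynomial.map_prod, eval_prod, prod_eq_zero_iff] at hroot
  obtain ⟨i, -, hi⟩ := hroot
  exact ⟨n i, by simpa [sub_eq_zero] using hi⟩

theorem stmt18_general {α : Type} [Fintype α] [DecidableEq α] (M : Matroid α)
    (hE : M.E = Set.univ) (hsimple : mSimple M)
    (r : ℕ)
    (F : Fin (r + 1) → Set α)
    (hmono : Monotone F)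
    (h0 : F 0 = ∅) (htop : F (Fin.last r) = M.E)
    (hmod : ∀ i, modularFlat M (F i))
    (hrank : ∀ i : Fin (r + 1), mrk M (F i) = i) :
    charPoly M =
      ∏ i : Fin r,
        (X - C (((F i.succ).ncard : ℤ) - ((F i.castSucc).ncard : ℤ))) ∧
    ∀ z ∈ ((charPoly M).map (Int.castRingHom ℂ)).roots, ∃ k : ℕ, z = (k : ℂ) := by
  classical
  set G : Fin (r + 1) → Finset α := fun i => (F i).toFinset
  have hG : ∀ i, (G i : Set α) = F i := fun i => Set.coe_toFinset _
  have hGmono : ∀ i : Fin r, G i.castSucc ⊆ G i.succ := fun i =>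
    Set.toFinset_subset_toFinset.2 (hmono i.castSucc_le_succ)
  have hchain := Fin.eq_prod_of_succ_eq_mul (fun i => charPolyOn M (G i)) _
    (by simp [G, h0, charPolyOn_empty]) fun i =>
      charPolyOn_eq_mul_of_modularFlat hsimple (hG _ ▸ hmod _) (hG _ ▸ (hmod _).1) (hGmono i)
        (by simp only [hG, hrank, Fin.val_succ, Fin.val_castSucc])
  have hlast : G (Fin.last r) = univ := by ext; simp [G, htop, hE]
  rw [charPoly_eq_charPolyOn_univ, ← hlast]
  refine ⟨hchain.trans (prod_congr rfl fun i _ => ?_), fun z hz =>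
    exists_natCast_eq_of_mem_roots_prod _ _ (hchain ▸ hz)⟩
  rw [card_sdiff_of_subset (hGmono i), Nat.cast_sub (card_le_card (hGmono i)),
    ← Set.ncard_eq_toFinset_card', ← Set.ncard_eq_toFinset_card']

/-- If `M` is a simple supersolvable matroid of rank `r` with maximal
chain of modular flats `∅ = F₀ ⊂ F₁ ⊂ ⋯ ⊂ F_r = E(M)` (with `rank Fᵢ = i`), then
`χ(M;λ) = Π_{i=1}^{r} (λ - (|Fᵢ| - |F_{i-1}|))`; in particular all characteristic roots
of `M` are nonnegative integers. -/
theorem stmt18 {α : Type} [Fintype α] [DecidableEq α] (M : Matroid α)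
    (hE : M.E = Set.univ) (hsimple : mSimple M)
    (r : ℕ) (hr : mrk M Set.univ = r)
    (F : Fin (r + 1) → Set α)
    (hmono : Monotone F)
    (h0 : F 0 = ∅) (htop : F (Fin.last r) = M.E)
    (hmod : ∀ i, modularFlat M (F i))
    (hrank : ∀ i : Fin (r + 1), mrk M (F i) = i) :
    charPoly M =
      ∏ i : Fin r,
        (X - C (((F i.succ).ncard : ℤ) - ((F i.castSucc).ncard : ℤ))) ∧
    ∀ z ∈ ((charPoly M).map (Int.castRingHom ℂ)).roots, ∃ k : ℕ, z = (k : ℂ) :=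
  stmt18_general M hE hsimple r F hmono h0 htop hmod hrank
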